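/- Certification of dependence (main lemma): let 𝓢 = W ∪ U ∪ Y with W, U, Y pairwise disjoint, W and Y nonempty, U independent in φ, and z ∈ Y. Suppose (i₁) some trace β models φ′_W ∧ φ′_Y ∧ ¬φ, and (i₂) for every trace α with z ∈ α_i ↔ z′ ∈ α_i at all states i, if α models φ′_W ∧ φ′_Y then α↾𝓢 models φ. Then (Σ_φ↾W) ⋈ (Σ_φ↾{z}) ≠ Σ_φ↾(W ∪ {z}). -/
import Mathlib


open Classical

/-- Syntax of LTL formulae over variable type `V`. -/
inductive LTL (V : Type) : Type
  | tt : LTL V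
  | var : V → LTL V
  | neg : LTL V → LTL V
  | conj : LTL V → LTL V → LTL V
  | next : LTL V → LTL V
  | untl : LTL V → LTL V → LTL V

namespace LTL

def rename {V : Type} (f : V → V) : LTL V → LTL V
  | tt => tt
  | var v => var (f v)
  | neg φ => neg (rename f φ)
  | conj φ ψ => conj (rename f φ) (rename f ψ)
  | next φ => next (rename f φ)
  | untl φ ψ => untl (rename f φ) (rename f ψ)

def vars {V : Type} : LTL V → Set V
  | tt => ∅
  | var v => {v}
  | neg φ => vars φ
  | conj φ ψ => vars φ ∪ vars ψ
  | next φ => vars φ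
  | untl φ ψ => vars φ ∪ vars ψ

/-- The "always" operator, defined from until. -/
def box {V : Type} (φ : LTL V) : LTL V := neg (untl tt (neg φ))

end LTL

/-- An (infinite) trace: each state is a set of variables (those true there). -/
abbrev Trace (V : Type) := ℕ → Set V

def Trace.shift {V : Type} (α : Trace V) (k : ℕ) : Trace V := fun i => α (i + k)

/-- Standard LTL satisfaction. -/
def Sat {V : Type} (α : Trace V) : LTL V → Prop
  | .tt => True
  | .var v => v ∈ α 0
  | .neg φ => ¬ Sat α φ
  | .conj φ ψ => Sat α φ ∧ Sat α ψ
  | .next φ => Sat (α.shift 1) φ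
  | .untl φ ψ => ∃ k, Sat (α.shift k) ψ ∧ ∀ j < k, Sat (α.shift j) φ

/-- The projection formula `φ′_W`: rename every variable in `W` to its primed copy. -/
noncomputable def projFormula {V : Type} (prime : V → V) (W : Set V) (φ : LTL V) : LTL V :=
  φ.rename (fun v => if v ∈ W then prime v else v)

/-- Projection of a trace over `E ∪ W`: keep environment variables and variables in `W`. -/
def projT {V : Type} (E W : Set V) (α : Trace V) : Trace V :=
  fun i => (α i ∩ E) ∪ (α i ∩ W)

/-- Projection of a set of traces. -/
def projS {V : Type} (E W : Set V) (Sig : Set (Trace V)) : Set (Trace V) :=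
  (projT E W) '' Sig

/-- Natural join of two sets of traces over `E ∪ W₁` and `E ∪ W₂`:
traces over `E ∪ W₁ ∪ W₂` whose projections lie in the respective sets. -/
def Join {V : Type} (E W₁ W₂ : Set V) (S₁ S₂ : Set (Trace V)) : Set (Trace V) :=
  {α | (∀ i, α i ⊆ E ∪ W₁ ∪ W₂) ∧ projT E W₁ α ∈ S₁ ∧ projT E W₂ α ∈ S₂}

/-- A set of traces is "over `E ∪ W`" if every state of every trace only uses those variables. -/
def TracesOver {V : Type} (E W : Set V) (Sig : Set (Trace V)) : Prop :=
  ∀ α ∈ Sig, ∀ i, α i ⊆ E ∪ W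

/-- `Σ_φ`: the set of traces over `E ∪ S` that model `φ`. -/
def ModelsOver {V : Type} (E S : Set V) (φ : LTL V) : Set (Trace V) :=
  {α | Sat α φ ∧ ∀ i, α i ⊆ E ∪ S}

/-- `W ⊆ S` is independent in `φ`:  `(Σ_φ ↾ W) ⋈ (Σ_φ ↾ (S \ W)) = Σ_φ`. -/
def Indep {V : Type} (E S : Set V) (φ : LTL V) (W : Set V) : Prop :=
  Join E W (S \ W) (projS E W (ModelsOver E S φ)) (projS E (S \ W) (ModelsOver E S φ))
    = ModelsOver E S φ

/-- A literal: a variable together with a polarity. -/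
def LTL.lit {V : Type} (p : V × Bool) : LTL V :=
  if p.2 then LTL.var p.1 else LTL.neg (LTL.var p.1)

/-- Conjunction of a list of formulae. -/
def LTL.bigConj {V : Type} (l : List (LTL V)) : LTL V :=
  l.foldr LTL.conj LTL.tt


lemma sat_congr {V : Type} (φ : LTL V) : ∀ (α α' : Trace V),
    (∀ i, ∀ v ∈ φ.vars, (v ∈ α i ↔ v ∈ α' i)) → (Sat α φ ↔ Sat α' φ) := by
  induction φ with
  | tt => intro α α' h; simp [Sat]
  | var v => intro α α' h; exact h 0 v rfl
  | neg φ ih => intro α α' h; simp only [Sat]; rw [ih α α' h]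
  | conj φ ψ ihφ ihψ =>
      intro α α' h
      simp only [Sat]
      rw [ihφ α α' (fun i v hv => h i v (Or.inl hv)),
          ihψ α α' (fun i v hv => h i v (Or.inr hv))]
  | next φ ih =>
      intro α α' h
      simp only [Sat]
      exact ih _ _ (fun i v hv => h (i+1) v hv)
  | untl φ ψ ihφ ihψ =>
      intro α α' h
      simp only [Sat]
      constructor
      · rintro ⟨k, hk, hj⟩
        exact ⟨k, (ihψ _ _ (fun i v hv => h (i+k) v (Or.inr hv))).mp hk,
          fun j hjk => (ihφ _ _ (fun i v hv => h (i+j) v (Or.inl hv))).mp (hj j hjk)⟩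
      · rintro ⟨k, hk, hj⟩
        exact ⟨k, (ihψ _ _ (fun i v hv => h (i+k) v (Or.inr hv))).mpr hk,
          fun j hjk => (ihφ _ _ (fun i v hv => h (i+j) v (Or.inl hv))).mpr (hj j hjk)⟩

lemma sat_rename {V : Type} (f : V → V) (φ : LTL V) : ∀ α : Trace V,
    Sat α (φ.rename f) ↔ Sat (fun i => f ⁻¹' (α i)) φ := by
  induction φ with
  | tt => intro α; simp [LTL.rename, Sat]
  | var v => intro α; exact Iff.rfl
  | neg φ ih => intro α; simp only [LTL.rename, Sat]; rw [ih α]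
  | conj φ ψ ihφ ihψ => intro α; simp only [LTL.rename, Sat]; rw [ihφ α, ihψ α]
  | next φ ih => intro α; simp only [LTL.rename, Sat]; exact ih _
  | untl φ ψ ihφ ihψ =>
      intro α
      simp only [LTL.rename, Sat]
      constructor
      · rintro ⟨k, hk, hj⟩
        exact ⟨k, (ihψ _).mp hk, fun j hjk => (ihφ _).mp (hj j hjk)⟩
      · rintro ⟨k, hk, hj⟩
        exact ⟨k, (ihψ _).mpr hk, fun j hjk => (ihφ _).mpr (hj j hjk)⟩

lemma vars_rename {V : Type} (f : V → V) (φ : LTL V) :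
    (φ.rename f).vars = f '' φ.vars := by
  induction φ with
  | tt => simp [LTL.rename, LTL.vars]
  | var v => simp [LTL.rename, LTL.vars]
  | neg φ ih => simpa [LTL.rename, LTL.vars] using ih
  | conj φ ψ ihφ ihψ => simp [LTL.rename, LTL.vars, ihφ, ihψ, Set.image_union]
  | next φ ih => simpa [LTL.rename, LTL.vars] using ih
  | untl φ ψ ihφ ihψ => simp [LTL.rename, LTL.vars, ihφ, ihψ, Set.image_union]

lemma mem_projT {V : Type} (E W : Set V) (α : Trace V) (i : ℕ) (v : V) :
    v ∈ projT E W α i ↔ v ∈ α i ∧ (v ∈ E ∨ v ∈ W) := by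
  simp only [projT, Set.mem_union, Set.mem_inter_iff]; tauto

lemma projT_eq {V : Type} {E W : Set V} {a b : Trace V}
    (h : ∀ i, ∀ v, v ∈ E ∨ v ∈ W → (v ∈ a i ↔ v ∈ b i)) :
    projT E W a = projT E W b := by
  funext i; ext v
  rw [mem_projT, mem_projT]
  by_cases hv : v ∈ E ∨ v ∈ W
  · rw [h i v hv]
  · tauto

lemma projT_mem_models {V : Type} {En Sy : Set V} {φ : LTL V} (hvars : φ.vars ⊆ En ∪ Sy)
    {α : Trace V} (h : Sat α φ) : projT En Sy α ∈ ModelsOver En Sy φ := by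
  constructor
  · refine (sat_congr φ α _ ?_).mp h
    intro i v hv
    have hv' := hvars hv
    rw [mem_projT]
    simp only [Set.mem_union] at hv'
    tauto
  · intro i v hv; rw [mem_projT] at hv
    simp only [Set.mem_union]; tauto
set_option maxHeartbeats 1000000 in
/-- certification of dependence (main lemma). -/
theorem stmt18 {V : Type} (En Sy : Set V) (hdis : Disjoint En Sy)
    (prime : V → V) (hinj : Function.Injective prime)
    (hfresh : ∀ v, prime v ∉ En ∪ Sy)
    (φ : LTL V) (hvars : φ.vars ⊆ En ∪ Sy)
    (W U Y : Set V) (hS : Sy = W ∪ U ∪ Y)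
    (hWU : W ∩ U = ∅) (hWY : W ∩ Y = ∅) (hUY : U ∩ Y = ∅)
    (hWne : W.Nonempty) (hYne : Y.Nonempty)
    (hUind : Indep En Sy φ U)
    (z : V) (hzY : z ∈ Y)
    (hi1 : ∃ β : Trace V,
      Sat β (((projFormula prime W φ).conj (projFormula prime Y φ)).conj (LTL.neg φ)))
    (hi2 : ∀ α : Trace V, (∀ i, z ∈ α i ↔ prime z ∈ α i) →
      Sat α ((projFormula prime W φ).conj (projFormula prime Y φ)) →
      projT En Sy α ∈ ModelsOver En Sy φ) :
    Join En W {z} (projS En W (ModelsOver En Sy φ)) (projS En {z} (ModelsOver En Sy φ))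
      ≠ projS En (W ∪ {z}) (ModelsOver En Sy φ) := by
  classical
  -- basic set facts
  have hWS : W ⊆ Sy := by rw [hS]; intro v hv; exact Or.inl (Or.inl hv)
  have hUS : U ⊆ Sy := by rw [hS]; intro v hv; exact Or.inl (Or.inr hv)
  have hYS : Y ⊆ Sy := by rw [hS]; intro v hv; exact Or.inr hv
  have hES : ∀ v, v ∈ En → v ∉ Sy := fun v hv => Set.disjoint_left.mp hdis hv
  have hzS : z ∈ Sy := hYS hzY
  have hzW : z ∉ W := by
    intro h; have : z ∈ W ∩ Y := ⟨h, hzY⟩; rw [hWY] at this; exact this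
  have hzU : z ∉ U := by
    intro h; have : z ∈ U ∩ Y := ⟨h, hzY⟩; rw [hUY] at this; exact this
  have hzE : z ∉ En := fun h => hES z h hzS
  -- the ceritificate trace
  obtain ⟨β, hβ⟩ := hi1
  have hβWY : Sat β ((projFormula prime W φ).conj (projFormula prime Y φ)) := hβ.1
  have hβW : Sat β (projFormula prime W φ) := hβWY.1
  have hβY : Sat β (projFormula prime Y φ) := hβWY.2
  have hβn : ¬ Sat β φ := hβ.2
  set fW : V → V := fun v => if v ∈ W then prime v else v with hfW
  set fY : V → V := fun v => if v ∈ Y then prime v else v with hfY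
  set τW : Trace V := fun i => fW ⁻¹' β i with hτW
  set τY : Trace V := fun i => fY ⁻¹' β i with hτY
  have hSatτW : Sat τW φ := (sat_rename fW φ β).mp hβW
  have hSatτY : Sat τY φ := (sat_rename fY φ β).mp hβY
  -- pointwise descriptions of τW, τY
  have hτWv : ∀ i v, v ∉ W → (v ∈ τW i ↔ v ∈ β i) := by
    intro i v hv; simp only [hτW, Set.mem_preimage, hfW, if_neg hv]
  have hτWw : ∀ i v, v ∈ W → (v ∈ τW i ↔ prime v ∈ β i) := by
    intro i v hv; simp only [hτW, Set.mem_preimage, hfW, if_pos hv]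
  have hτYv : ∀ i v, v ∉ Y → (v ∈ τY i ↔ v ∈ β i) := by
    intro i v hv; simp only [hτY, Set.mem_preimage, hfY, if_neg hv]
  have hτYy : ∀ i v, v ∈ Y → (v ∈ τY i ↔ prime v ∈ β i) := by
    intro i v hv; simp only [hτY, Set.mem_preimage, hfY, if_pos hv]
  -- the two models obtained from β
  have hαW : projT En Sy τW ∈ ModelsOver En Sy φ := projT_mem_models hvars hSatτW
  have hαY : projT En Sy τY ∈ ModelsOver En Sy φ := projT_mem_models hvars hSatτY
  -- the counterexample trace δ
  set δ : Trace V := fun i => β i ∩ (En ∪ W ∪ {z}) with hδ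
  have hδv : ∀ i v, v ∈ δ i ↔ v ∈ β i ∧ (v ∈ En ∨ v ∈ W ∨ v = z) := by
    intro i v
    simp only [hδ, Set.mem_inter_iff, Set.mem_union, Set.mem_singleton_iff]
    tauto
  intro h
  -- δ is in the join
  have hδJ : δ ∈ Join En W {z}
      (projS En W (ModelsOver En Sy φ)) (projS En {z} (ModelsOver En Sy φ)) := by
    refine ⟨?_, ⟨projT En Sy τY, hαY, ?_⟩, ⟨projT En Sy τW, hαW, ?_⟩⟩
    · intro i v hv
      rw [hδv] at hv
      simp only [Set.mem_union, Set.mem_singleton_iff]; tauto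
    · -- projT En W (projT En Sy τY) = projT En W δ
      refine projT_eq ?_
      intro i v hv
      rw [mem_projT, hδv]
      rcases hv with hv | hv
      · have h1 : v ∉ Y := fun hy => hES v hv (hYS hy)
        rw [hτYv i v h1]
        have := hES v hv; tauto
      · have h1 : v ∉ Y := by
          intro hy; have : v ∈ W ∩ Y := ⟨hv, hy⟩; rw [hWY] at this; exact this
        rw [hτYv i v h1]
        have := hWS hv; tauto
    · -- projT En {z} (projT En Sy τW) = projT En {z} δ
      refine projT_eq ?_
      intro i v hv
      rw [mem_projT, hδv]
      simp only [Set.mem_singleton_iff] at hv ⊢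
      rcases hv with hv | rfl
      · have h1 : v ∉ W := fun hw => hES v hv (hWS hw)
        rw [hτWv i v h1]
        have := hES v hv; tauto
      · rw [hτWv i v hzW]
        tauto
  rw [h] at hδJ
  obtain ⟨γ, hgS, hγeq⟩ := hδJ
  -- γ agrees with β on En, W and z
  have hγv : ∀ i v, (v ∈ En ∨ v ∈ W ∨ v = z) → (v ∈ γ i ↔ v ∈ β i) := by
    intro i v hv
    have h1 := (Set.ext_iff.mp (congrFun hγeq i)) v
    rw [mem_projT, hδv] at h1
    simp only [Set.mem_union, Set.mem_singleton_iff] at h1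
    exact ⟨fun h2 => ((h1.mp ⟨h2, hv⟩).1), fun h2 => ((h1.mpr ⟨h2, hv⟩).1)⟩
  have hγmod := hgS
  have hαYmod := hαY
  -- join γ with αY := projT En Sy τY along U-independence
  set ν : Trace V := fun i => (projT En Sy τY i ∩ (En ∪ U)) ∪ (γ i ∩ (Sy \ U)) with hν
  have hνv : ∀ i v, v ∈ ν i ↔
      ((v ∈ τY i ∧ (v ∈ En ∨ v ∈ Sy)) ∧ (v ∈ En ∨ v ∈ U)) ∨
      (v ∈ γ i ∧ v ∈ Sy ∧ v ∉ U) := by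
    intro i v
    simp only [hν, Set.mem_union, Set.mem_inter_iff, mem_projT, Set.mem_diff]
  have hνJ : ν ∈ Join En U (Sy \ U)
      (projS En U (ModelsOver En Sy φ)) (projS En (Sy \ U) (ModelsOver En Sy φ)) := by
    refine ⟨?_, ⟨projT En Sy τY, hαYmod, ?_⟩, ⟨γ, hγmod, ?_⟩⟩
    · intro i v hv
      rw [hνv] at hv
      simp only [Set.mem_union, Set.mem_diff]
      tauto
    · refine projT_eq ?_
      intro i v hv
      rw [mem_projT, hνv]
      rcases hv with hv | hv
      · have := hES v hv; tauto
      · have := hUS hv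
        have h2 : v ∉ En := fun he => hES v he (hUS hv)
        tauto
    · refine projT_eq ?_
      intro i v hv
      rw [hνv]
      simp only [Set.mem_diff] at hv
      rcases hv with hv | hv
      · -- v ∈ En : both sides reduce to v ∈ β i … need γ = τY = β on En
        have h1 : v ∉ Sy := hES v hv
        have h2 : v ∉ Y := fun hy => h1 (hYS hy)
        have h3 := hτYv i v h2
        have h4 := hγv i v (Or.inl hv)
        tauto
      · have h2 : v ∉ En := fun he => hES v he hv.1
        tauto
  rw [hUind] at hνJ
  obtain ⟨hνSat, hνsub⟩ := hνJ
  -- ν agrees with β on En, W, U and z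
  have hνEn : ∀ i v, v ∈ En → (v ∈ ν i ↔ v ∈ β i) := by
    intro i v hv
    rw [hνv]
    have h1 : v ∉ Sy := hES v hv
    have h2 : v ∉ Y := fun hy => h1 (hYS hy)
    have h3 := hτYv i v h2
    tauto
  have hνW : ∀ i v, v ∈ W → (v ∈ ν i ↔ v ∈ β i) := by
    intro i v hv
    rw [hνv]
    have h1 : v ∈ Sy := hWS hv
    have h2 : v ∉ En := fun he => hES v he h1
    have h3 : v ∉ U := by
      intro hu; have : v ∈ W ∩ U := ⟨hv, hu⟩; rw [hWU] at this; exact this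
    have h4 := hγv i v (Or.inr (Or.inl hv))
    tauto
  have hνU : ∀ i v, v ∈ U → (v ∈ ν i ↔ v ∈ β i) := by
    intro i v hv
    rw [hνv]
    have h1 : v ∈ Sy := hUS hv
    have h2 : v ∉ Y := by
      intro hy; have : v ∈ U ∩ Y := ⟨hv, hy⟩; rw [hUY] at this; exact this
    have h3 := hτYv i v h2
    tauto
  have hνz : ∀ i, z ∈ ν i ↔ z ∈ β i := by
    intro i
    rw [hνv]
    have h4 := hγv i z (Or.inr (Or.inr rfl))
    tauto
  -- the combined trace α
  set α : Trace V := fun i => (β i ∩ (En ∪ Sy ∪ prime '' W)) ∪ (prime '' (ν i ∩ Y))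
    with hα
  have hαv : ∀ i v, v ∈ α i ↔
      (v ∈ β i ∧ ((v ∈ En ∨ v ∈ Sy) ∨ v ∈ prime '' W)) ∨ v ∈ prime '' (ν i ∩ Y) := by
    intro i v
    simp only [hα, Set.mem_union, Set.mem_inter_iff]
  -- α agrees with β on unprimed variables
  have hαβ : ∀ i v, v ∈ En ∪ Sy → (v ∈ α i ↔ v ∈ β i) := by
    intro i v hv
    rw [hαv]
    have h1 : v ∉ prime '' (ν i ∩ Y) := by
      rintro ⟨u, -, rfl⟩; exact hfresh u hv
    simp only [Set.mem_union] at hv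
    tauto
  -- (a) z and z′ agree along α
  have hzz : ∀ i, z ∈ α i ↔ prime z ∈ α i := by
    intro i
    have h1 : z ∈ α i ↔ z ∈ β i := hαβ i z (Or.inr hzS)
    have h2 : prime z ∈ α i ↔ z ∈ ν i := by
      rw [hαv]
      constructor
      · rintro (⟨-, (hp | hp)⟩ | ⟨u, ⟨hu, -⟩, he⟩)
        · exact absurd hp (hfresh z)
        · obtain ⟨w, hw, he⟩ := hp; exact absurd (hinj he ▸ hw) hzW
        · exact hinj he ▸ hu
      · intro hz; exact Or.inr ⟨z, ⟨hz, hzY⟩, rfl⟩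
    rw [h1, h2, hνz i]
  -- (b) α satisfies φ′_W
  have hSatαW : Sat α (projFormula prime W φ) := by
    refine (sat_congr _ β α ?_).mp hβW
    intro i v hv
    rw [projFormula, vars_rename] at hv
    obtain ⟨u, hu, rfl⟩ := hv
    by_cases huW : u ∈ W
    · simp only [if_pos huW]
      rw [hαv]
      have h1 : prime u ∉ prime '' (ν i ∩ Y) := by
        rintro ⟨y, ⟨-, hy⟩, he⟩
        have : u ∈ W ∩ Y := ⟨huW, hinj he ▸ hy⟩
        rw [hWY] at this; exact this
      have h2 : prime u ∈ prime '' W := ⟨u, huW, rfl⟩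
      tauto
    · simp only [if_neg huW]
      exact (hαβ i u (hvars hu)).symm
  -- (c) α satisfies φ′_Y
  have hSatαY : Sat α (projFormula prime Y φ) := by
    rw [projFormula, sat_rename]
    refine (sat_congr φ ν _ ?_).mp hνSat
    intro i v hv
    have hv' := hvars hv
    simp only [Set.mem_preimage]
    by_cases hvY : v ∈ Y
    · simp only [if_pos hvY]
      rw [hαv]
      constructor
      · intro hn; exact Or.inr ⟨v, ⟨hn, hvY⟩, rfl⟩
      · rintro (⟨-, (hp | hp)⟩ | ⟨u, ⟨hu, -⟩, he⟩)
        · exact absurd hp (hfresh v)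
        · obtain ⟨w, hw, he⟩ := hp
          have : v ∈ W ∩ Y := ⟨hinj he ▸ hw, hvY⟩
          rw [hWY] at this; exact this.elim
        · exact hinj he ▸ hu
    · simp only [if_neg hvY]
      rw [hαβ i v hv']
      rcases hv' with hv' | hv'
      · exact hνEn i v hv'
      · rw [hS] at hv'
        rcases hv' with (hv' | hv') | hv'
        · exact hνW i v hv'
        · exact hνU i v hv'
        · exact absurd hv' hvY
  -- conclude via (i₂)
  have hproj := hi2 α hzz ⟨hSatαW, hSatαY⟩
  apply hβn
  refine (sat_congr φ (projT En Sy α) β ?_).mp hproj.1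
  intro i v hv
  have hv' := hvars hv
  rw [mem_projT, hαβ i v hv']
  simp only [Set.mem_union] at hv'
  tauto
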